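/- arXiv:2202.10097 — 2 statements merged into one kernel-verified Lean document; each statement's English description precedes it below -/
import Mathlib

section
/- Let (C_N, α_N) and (D_N, β_N) be sequences of ℤ-graded chain complexes of 𝔽₂-vector spaces with increment chain maps, and let (φ_N⁰, κ_N⁰) and (φ_N¹, κ_N¹) be two morphisms of telescope data from (C_N, α_N) to (D_N, β_N) (i.e. for u = 0,1, the φ_N^u : C_N → D_N are chain maps and κ_N^u : C_N → D_{N+1} are degree +1 maps with φ_{N+1}^u α_N + β_N φ_N^u = d κ_N^u + κ_N^u d). Suppose there are degree +1 maps φ_N : C_N → D_N and degree +2 maps κ_N : C_N → D_{N+1} such that φ_N¹ + φ_N⁰ = d φ_N + φ_N d and κ_N¹ + κ_N⁰ + φ_{N+1} α_N + β_N φ_N = d κ_N + κ_N d. Then the map Tel(φ, κ) : Tel(C_N, α_N) → Tel(D_N, β_N) defined by Tel(φ, κ)(a + q·b) = φ_N(a) + κ_N(b) + q·φ_N(b) is a chain homotopy between the induced maps: Tel(φ⁰, κ⁰) + Tel(φ¹, κ¹) = δ ∘ Tel(φ, κ) + Tel(φ, κ) ∘ δ. -/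
open DirectSum

/-- A ℤ-graded chain complex of vector spaces over `𝔽₂ = ZMod 2`, with a
differential `d` of degree `-1` squaring to zero.  The grading is recorded as
an internal direct sum decomposition of the underlying module, and `d` maps
the degree `i` part into the degree `i - 1` part. -/
structure F2GradedComplex : Type 1 where
  V : Type
  [addCommGroup : AddCommGroup V]
  [module : Module (ZMod 2) V]
  grading : ℤ → Submodule (ZMod 2) V
  internal : DirectSum.IsInternal grading
  d : V →ₗ[ZMod 2] V
  d_degree : ∀ i : ℤ, (grading i).map d ≤ grading (i - 1)
  d_sq : d ∘ₗ d = 0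

attribute [instance] F2GradedComplex.addCommGroup F2GradedComplex.module

/-- A linear map is homogeneous of degree `k`. -/
def HasDegree (C D : F2GradedComplex) (k : ℤ) (f : C.V →ₗ[ZMod 2] D.V) : Prop :=
  ∀ i : ℤ, (C.grading i).map f ≤ D.grading (i + k)

/-- A chain map: a linear map of degree `0` commuting with the differentials. -/
def IsChainMap (C D : F2GradedComplex) (f : C.V →ₗ[ZMod 2] D.V) : Prop :=
  HasDegree C D 0 f ∧ f ∘ₗ C.d = D.d ∘ₗ f

/-- Underlying module of the telescope `Tel(C_N, α_N) = ⊕_N (C_N ⊕ q·C_N)`: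
in the summand of index `N`, the first factor is the copy of `C_N` and the
second factor is the copy `q·C_N` (`q` a formal variable of degree one, so an
element of degree `i` of the telescope has first component of degree `i` and
second component of degree `i - 1`). -/
abbrev TelV (C : ℕ → F2GradedComplex) : Type :=
  ⨁ N : ℕ, ((C N).V × (C N).V)

/-- The degree `i` part of the telescope: sums of `a + q·b` with `a` of degree
`i` and `b` of degree `i - 1`. -/
noncomputable def telGrading (C : ℕ → F2GradedComplex) (i : ℤ) :
    Submodule (ZMod 2) (TelV C) :=
  ⨆ N : ℕ, Submodule.map (DirectSum.lof (ZMod 2) ℕ (fun N => (C N).V × (C N).V) N)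
    (((C N).grading i).prod ((C N).grading (i - 1)))

/-- The telescope differential, given on `a + q·b` (with `a, b ∈ C_N`) by
`δ (a + q·b) = d a + q·(d b) + α_N b + b`: the summand of index `N` receives
`(d a + b) + q·(d b)` and the summand of index `N + 1` receives `α_N b`. -/
noncomputable def telDelta (C : ℕ → F2GradedComplex)
    (α : ∀ N : ℕ, (C N).V →ₗ[ZMod 2] (C (N + 1)).V) :
    TelV C →ₗ[ZMod 2] TelV C :=
  DirectSum.toModule (ZMod 2) ℕ (TelV C) fun N =>
    (DirectSum.lof (ZMod 2) ℕ (fun N => (C N).V × (C N).V) N ∘ₗ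
        LinearMap.prod
          ((C N).d ∘ₗ LinearMap.fst (ZMod 2) (C N).V (C N).V
            + LinearMap.snd (ZMod 2) (C N).V (C N).V)
          ((C N).d ∘ₗ LinearMap.snd (ZMod 2) (C N).V (C N).V))
      + (DirectSum.lof (ZMod 2) ℕ (fun N => (C N).V × (C N).V) (N + 1) ∘ₗ
          LinearMap.prod (α N ∘ₗ LinearMap.snd (ZMod 2) (C N).V (C N).V) 0)


/-- The map of telescopes `Tel(φ_N, κ_N)` associated with maps
`φ_N : C_N → D_N` and `κ_N : C_N → D_{N+1}`, given on `a + q·b`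
(with `a, b ∈ C_N`) by `Tel(φ_N, κ_N)(a + q·b) = φ_N(a) + κ_N(b) + q·φ_N(b)`. -/
noncomputable def telMap (C D : ℕ → F2GradedComplex)
    (φ : ∀ N : ℕ, (C N).V →ₗ[ZMod 2] (D N).V)
    (κ : ∀ N : ℕ, (C N).V →ₗ[ZMod 2] (D (N + 1)).V) :
    TelV C →ₗ[ZMod 2] TelV D :=
  DirectSum.toModule (ZMod 2) ℕ (TelV D) fun N =>
    (DirectSum.lof (ZMod 2) ℕ (fun N => (D N).V × (D N).V) N ∘ₗ
        LinearMap.prod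
          (φ N ∘ₗ LinearMap.fst (ZMod 2) (C N).V (C N).V)
          (φ N ∘ₗ LinearMap.snd (ZMod 2) (C N).V (C N).V))
      + (DirectSum.lof (ZMod 2) ℕ (fun N => (D N).V × (D N).V) (N + 1) ∘ₗ
          LinearMap.prod (κ N ∘ₗ LinearMap.snd (ZMod 2) (C N).V (C N).V) 0)

/-! Both sides of the homotopy identity are telescope maps: `Tel` is additive in `(φ, κ)`,
and evaluating `δ ∘ Tel(Φ, K) + Tel(Φ, K) ∘ δ` on a summand `C_N ⊕ q·C_N` shows that it is
`Tel(dΦ + Φd, dK + Kd + βΦ + Φα)`, the two copies of `Φ b` put in the `C_N`-slot cancelling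
modulo 2. The hypotheses identify these components with `φ⁰ + φ¹` and `κ⁰ + κ¹`. -/

theorem DirectSum.lof_prod_mk {R ι : Type*} [Semiring R] [DecidableEq ι] {A B : ι → Type*}
    [∀ i, AddCommMonoid (A i)] [∀ i, Module R (A i)] [∀ i, AddCommMonoid (B i)]
    [∀ i, Module R (B i)] (i : ι) (x : A i) (y : B i) :
    lof R ι (fun i => A i × B i) i (x, y)
      = lof R ι (fun i => A i × B i) i (LinearMap.inl R _ _ x)
        + lof R ι (fun i => A i × B i) i (LinearMap.inr R _ _ y) := by
  rw [← map_add, LinearMap.inl_apply, LinearMap.inr_apply, Prod.mk_add_mk, add_zero, zero_add]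

section Telescope

variable {C D : ℕ → F2GradedComplex}

theorem telDelta_lof (α : ∀ N : ℕ, (C N).V →ₗ[ZMod 2] (C (N + 1)).V) (N : ℕ) (a b : (C N).V) :
    telDelta C α (lof (ZMod 2) ℕ (fun N => (C N).V × (C N).V) N (a, b))
      = lof (ZMod 2) ℕ (fun N => (C N).V × (C N).V) N ((C N).d a + b, (C N).d b)
        + lof (ZMod 2) ℕ (fun N => (C N).V × (C N).V) (N + 1) (α N b, 0) := by
  simp [telDelta]

theorem telMap_lof (φ : ∀ N : ℕ, (C N).V →ₗ[ZMod 2] (D N).V)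
    (κ : ∀ N : ℕ, (C N).V →ₗ[ZMod 2] (D (N + 1)).V) (N : ℕ) (a b : (C N).V) :
    telMap C D φ κ (lof (ZMod 2) ℕ (fun N => (C N).V × (C N).V) N (a, b))
      = lof (ZMod 2) ℕ (fun N => (D N).V × (D N).V) N (φ N a, φ N b)
        + lof (ZMod 2) ℕ (fun N => (D N).V × (D N).V) (N + 1) (κ N b, 0) := by
  simp [telMap]

theorem telMap_add (φ φ' : ∀ N : ℕ, (C N).V →ₗ[ZMod 2] (D N).V)
    (κ κ' : ∀ N : ℕ, (C N).V →ₗ[ZMod 2] (D (N + 1)).V) :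
    telMap C D φ κ + telMap C D φ' κ'
      = telMap C D (fun N => φ N + φ' N) (fun N => κ N + κ' N) := by
  refine DirectSum.linearMap_ext _ fun N => LinearMap.ext fun ⟨a, b⟩ => ?_
  simp only [LinearMap.comp_apply, LinearMap.add_apply, telMap_lof]
  simp only [DirectSum.lof_prod_mk, map_add, map_zero]
  abel

theorem telDelta_comp_telMap_add_telMap_comp_telDelta
    (α : ∀ N : ℕ, (C N).V →ₗ[ZMod 2] (C (N + 1)).V)
    (β : ∀ N : ℕ, (D N).V →ₗ[ZMod 2] (D (N + 1)).V)
    (Φ : ∀ N : ℕ, (C N).V →ₗ[ZMod 2] (D N).V)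
    (K : ∀ N : ℕ, (C N).V →ₗ[ZMod 2] (D (N + 1)).V) :
    telDelta D β ∘ₗ telMap C D Φ K + telMap C D Φ K ∘ₗ telDelta C α
      = telMap C D (fun N => (D N).d ∘ₗ Φ N + Φ N ∘ₗ (C N).d)
          (fun N => (D (N + 1)).d ∘ₗ K N + K N ∘ₗ (C N).d + β N ∘ₗ Φ N + Φ (N + 1) ∘ₗ α N) := by
  refine DirectSum.linearMap_ext _ fun N => LinearMap.ext fun ⟨a, b⟩ => ?_
  simp only [LinearMap.comp_apply, LinearMap.add_apply, telMap_lof, telDelta_lof, map_add,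
    map_zero, add_zero]
  simp only [DirectSum.lof_prod_mk, map_add, map_zero, add_zero]
  linear_combination (norm := module) ZModModule.add_self
    (lof (ZMod 2) ℕ (fun N => (D N).V × (D N).V) N (LinearMap.inl (ZMod 2) _ _ (Φ N b)))

end Telescope

theorem telMap_homotopy_general (C D : ℕ → F2GradedComplex)
    (α : ∀ N : ℕ, (C N).V →ₗ[ZMod 2] (C (N + 1)).V)
    (β : ∀ N : ℕ, (D N).V →ₗ[ZMod 2] (D (N + 1)).V)
    (φ₀ : ∀ N : ℕ, (C N).V →ₗ[ZMod 2] (D N).V)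
    (κ₀ : ∀ N : ℕ, (C N).V →ₗ[ZMod 2] (D (N + 1)).V)
    (φ₁ : ∀ N : ℕ, (C N).V →ₗ[ZMod 2] (D N).V)
    (κ₁ : ∀ N : ℕ, (C N).V →ₗ[ZMod 2] (D (N + 1)).V)
    (Φ : ∀ N : ℕ, (C N).V →ₗ[ZMod 2] (D N).V)
    (K : ∀ N : ℕ, (C N).V →ₗ[ZMod 2] (D (N + 1)).V)
    (hΦhtpy : ∀ N : ℕ, φ₁ N + φ₀ N = (D N).d ∘ₗ Φ N + Φ N ∘ₗ (C N).d)
    (hKhtpy : ∀ N : ℕ,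
      κ₁ N + κ₀ N + Φ (N + 1) ∘ₗ α N + β N ∘ₗ Φ N
        = (D (N + 1)).d ∘ₗ K N + K N ∘ₗ (C N).d) :
    telMap C D φ₀ κ₀ + telMap C D φ₁ κ₁
      = telDelta D β ∘ₗ telMap C D Φ K + telMap C D Φ K ∘ₗ telDelta C α := by
  rw [telMap_add, telDelta_comp_telMap_add_telMap_comp_telDelta]
  congr 1 <;> funext N
  · rw [add_comm, hΦhtpy]
  · rw [← hKhtpy]
    linear_combination (norm := module)
      -ZModModule.add_self (Φ (N + 1) ∘ₗ α N) - ZModModule.add_self (β N ∘ₗ Φ N)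

/-- If `(φ_N⁰, κ_N⁰)` and `(φ_N¹, κ_N¹)` are morphisms of
telescope data from `(C_N, α_N)` to `(D_N, β_N)`, and there are degree `+1`
maps `Φ_N : C_N → D_N` and degree `+2` maps `K_N : C_N → D_{N+1}` with
`φ¹ + φ⁰ = d Φ + Φ d` and `κ¹ + κ⁰ + Φ α + β Φ = d K + K d`, then
`Tel(Φ, K)` is a chain homotopy between `Tel(φ⁰, κ⁰)` and `Tel(φ¹, κ¹)`:
`Tel(φ⁰, κ⁰) + Tel(φ¹, κ¹) = δ ∘ Tel(Φ, K) + Tel(Φ, K) ∘ δ`. -/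
theorem telMap_homotopy (C D : ℕ → F2GradedComplex)
    (α : ∀ N : ℕ, (C N).V →ₗ[ZMod 2] (C (N + 1)).V)
    (hα : ∀ N : ℕ, IsChainMap (C N) (C (N + 1)) (α N))
    (β : ∀ N : ℕ, (D N).V →ₗ[ZMod 2] (D (N + 1)).V)
    (hβ : ∀ N : ℕ, IsChainMap (D N) (D (N + 1)) (β N))
    (φ₀ : ∀ N : ℕ, (C N).V →ₗ[ZMod 2] (D N).V)
    (hφ₀ : ∀ N : ℕ, IsChainMap (C N) (D N) (φ₀ N))
    (κ₀ : ∀ N : ℕ, (C N).V →ₗ[ZMod 2] (D (N + 1)).V)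
    (hκ₀ : ∀ N : ℕ, HasDegree (C N) (D (N + 1)) 1 (κ₀ N))
    (hφκ₀ : ∀ N : ℕ,
      φ₀ (N + 1) ∘ₗ α N + β N ∘ₗ φ₀ N = (D (N + 1)).d ∘ₗ κ₀ N + κ₀ N ∘ₗ (C N).d)
    (φ₁ : ∀ N : ℕ, (C N).V →ₗ[ZMod 2] (D N).V)
    (hφ₁ : ∀ N : ℕ, IsChainMap (C N) (D N) (φ₁ N))
    (κ₁ : ∀ N : ℕ, (C N).V →ₗ[ZMod 2] (D (N + 1)).V)
    (hκ₁ : ∀ N : ℕ, HasDegree (C N) (D (N + 1)) 1 (κ₁ N))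
    (hφκ₁ : ∀ N : ℕ,
      φ₁ (N + 1) ∘ₗ α N + β N ∘ₗ φ₁ N = (D (N + 1)).d ∘ₗ κ₁ N + κ₁ N ∘ₗ (C N).d)
    (Φ : ∀ N : ℕ, (C N).V →ₗ[ZMod 2] (D N).V)
    (hΦ : ∀ N : ℕ, HasDegree (C N) (D N) 1 (Φ N))
    (K : ∀ N : ℕ, (C N).V →ₗ[ZMod 2] (D (N + 1)).V)
    (hK : ∀ N : ℕ, HasDegree (C N) (D (N + 1)) 2 (K N))
    (hΦhtpy : ∀ N : ℕ, φ₁ N + φ₀ N = (D N).d ∘ₗ Φ N + Φ N ∘ₗ (C N).d)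
    (hKhtpy : ∀ N : ℕ,
      κ₁ N + κ₀ N + Φ (N + 1) ∘ₗ α N + β N ∘ₗ Φ N
        = (D (N + 1)).d ∘ₗ K N + K N ∘ₗ (C N).d) :
    telMap C D φ₀ κ₀ + telMap C D φ₁ κ₁
      = telDelta D β ∘ₗ telMap C D Φ K + telMap C D Φ K ∘ₗ telDelta C α :=
  telMap_homotopy_general C D α β φ₀ κ₀ φ₁ κ₁ Φ K hΦhtpy hKhtpy
end

section
/- Let (C_N, α_N) and (D_N, β_N) be sequences of ℤ-graded chain complexes of 𝔽₂-vector spaces with increment chain maps. Let (φ_N, κ_N) be a morphism of telescope data from (C_N, α_N) to (D_N, β_N) and (χ_N, λ_N) a morphism of telescope data from (D_N, β_N) to (C_N, α_N), and suppose the composition (χ_N ∘ φ_N, χ_{N+1} ∘ κ_N + λ_N ∘ φ_N) is homotopic (in the sense of telescope data) to the identity morphism (id_{C_N}, 0), and that (φ_N ∘ χ_N, φ_{N+1} ∘ λ_N + κ_N ∘ χ_N) is homotopic to (id_{D_N}, 0). Then Tel(φ_N, κ_N) and Tel(χ_N, λ_N) are mutually inverse homotopy equivalences between Tel(C_N, α_N)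 and Tel(D_N, β_N): Tel(χ_N, λ_N) ∘ Tel(φ_N, κ_N) is chain homotopic to the identity of Tel(C_N, α_N), and Tel(φ_N, κ_N) ∘ Tel(χ_N, λ_N) is chain homotopic to the identity of Tel(D_N, β_N). -/
open DirectSum

/-- A morphism of telescope data from `(C_N, α_N)` to `(D_N, β_N)`: chain maps
`φ_N : C_N → D_N` together with degree `+1` maps `κ_N : C_N → D_{N+1}`
satisfying `φ_{N+1} α_N + β_N φ_N = d κ_N + κ_N d`. -/
def IsTelMorphism (C D : ℕ → F2GradedComplex)
    (α : ∀ N : ℕ, (C N).V →ₗ[ZMod 2] (C (N + 1)).V)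
    (β : ∀ N : ℕ, (D N).V →ₗ[ZMod 2] (D (N + 1)).V)
    (φ : ∀ N : ℕ, (C N).V →ₗ[ZMod 2] (D N).V)
    (κ : ∀ N : ℕ, (C N).V →ₗ[ZMod 2] (D (N + 1)).V) : Prop :=
  (∀ N : ℕ, IsChainMap (C N) (D N) (φ N)) ∧
  (∀ N : ℕ, HasDegree (C N) (D (N + 1)) 1 (κ N)) ∧
  (∀ N : ℕ,
    φ (N + 1) ∘ₗ α N + β N ∘ₗ φ N = (D (N + 1)).d ∘ₗ κ N + κ N ∘ₗ (C N).d)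

/-- Two morphisms of telescope data `(φ⁰, κ⁰)` and `(φ¹, κ¹)` are homotopic:
there are degree `+1` maps `Φ_N : C_N → D_N` and degree `+2` maps
`K_N : C_N → D_{N+1}` with `φ¹ + φ⁰ = d Φ + Φ d` and
`κ¹ + κ⁰ + Φ α + β Φ = d K + K d`. -/
def TelMorphismHomotopic (C D : ℕ → F2GradedComplex)
    (α : ∀ N : ℕ, (C N).V →ₗ[ZMod 2] (C (N + 1)).V)
    (β : ∀ N : ℕ, (D N).V →ₗ[ZMod 2] (D (N + 1)).V)
    (φ₀ : ∀ N : ℕ, (C N).V →ₗ[ZMod 2] (D N).V)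
    (κ₀ : ∀ N : ℕ, (C N).V →ₗ[ZMod 2] (D (N + 1)).V)
    (φ₁ : ∀ N : ℕ, (C N).V →ₗ[ZMod 2] (D N).V)
    (κ₁ : ∀ N : ℕ, (C N).V →ₗ[ZMod 2] (D (N + 1)).V) : Prop :=
  ∃ (Φ : ∀ N : ℕ, (C N).V →ₗ[ZMod 2] (D N).V)
    (K : ∀ N : ℕ, (C N).V →ₗ[ZMod 2] (D (N + 1)).V),
    (∀ N : ℕ, HasDegree (C N) (D N) 1 (Φ N)) ∧
    (∀ N : ℕ, HasDegree (C N) (D (N + 1)) 2 (K N)) ∧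
    (∀ N : ℕ, φ₁ N + φ₀ N = (D N).d ∘ₗ Φ N + Φ N ∘ₗ (C N).d) ∧
    (∀ N : ℕ,
      κ₁ N + κ₀ N + Φ (N + 1) ∘ₗ α N + β N ∘ₗ Φ N
        = (D (N + 1)).d ∘ₗ K N + K N ∘ₗ (C N).d)

section TelescopeHelpers

/-- In a module over `ZMod 2`, every element is its own negative. -/
lemma F2_add_self {M : Type*} [AddCommGroup M] [Module (ZMod 2) M] (x : M) :
    x + x = 0 := by
  have h : ((2 : ZMod 2)) • x = x + x := two_smul _ x
  rw [← h, show (2 : ZMod 2) = 0 from rfl, zero_smul]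

lemma F2_two_nsmul {M : Type*} [AddCommGroup M] [Module (ZMod 2) M] (x : M) :
    (2 : ℕ) • x = 0 := by
  rw [two_nsmul]; exact F2_add_self x

lemma F2_two_zsmul {M : Type*} [AddCommGroup M] [Module (ZMod 2) M] (x : M) :
    (2 : ℤ) • x = 0 := by
  rw [two_zsmul]; exact F2_add_self x

/-- The copy of `a ∈ C_N` in the telescope. -/
noncomputable def lone (C : ℕ → F2GradedComplex) (N : ℕ) (u : (C N).V) : TelV C :=
  DirectSum.lof (ZMod 2) ℕ (fun N => (C N).V × (C N).V) N (u, 0)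

/-- The copy of `q·b`, `b ∈ C_N`, in the telescope. -/
noncomputable def ltwo (C : ℕ → F2GradedComplex) (N : ℕ) (v : (C N).V) : TelV C :=
  DirectSum.lof (ZMod 2) ℕ (fun N => (C N).V × (C N).V) N (0, v)

lemma lof_split (C : ℕ → F2GradedComplex) (N : ℕ) (x : (C N).V × (C N).V) :
    DirectSum.lof (ZMod 2) ℕ (fun N => (C N).V × (C N).V) N x
      = lone C N x.1 + ltwo C N x.2 := by
  rw [lone, ltwo, ← map_add, Prod.mk_add_mk, add_zero, zero_add]

lemma lone_add (C : ℕ → F2GradedComplex) (N : ℕ) (u u' : (C N).V) :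
    lone C N (u + u') = lone C N u + lone C N u' := by
  rw [lone, lone, lone, ← map_add, Prod.mk_add_mk, add_zero]

lemma ltwo_add (C : ℕ → F2GradedComplex) (N : ℕ) (v v' : (C N).V) :
    ltwo C N (v + v') = ltwo C N v + ltwo C N v' := by
  rw [ltwo, ltwo, ltwo, ← map_add, Prod.mk_add_mk, add_zero]

lemma lone_zero (C : ℕ → F2GradedComplex) (N : ℕ) : lone C N 0 = 0 := by
  rw [lone, Prod.mk_zero_zero, map_zero]

lemma ltwo_zero (C : ℕ → F2GradedComplex) (N : ℕ) : ltwo C N 0 = 0 := by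
  rw [ltwo, Prod.mk_zero_zero, map_zero]

lemma telMap_lone (C D : ℕ → F2GradedComplex)
    (φ : ∀ N : ℕ, (C N).V →ₗ[ZMod 2] (D N).V)
    (κ : ∀ N : ℕ, (C N).V →ₗ[ZMod 2] (D (N + 1)).V)
    (N : ℕ) (u : (C N).V) :
    telMap C D φ κ (lone C N u) = lone D N (φ N u) := by
  simp [lone, telMap, DirectSum.toModule_lof, Prod.mk_zero_zero]

lemma telMap_ltwo (C D : ℕ → F2GradedComplex)
    (φ : ∀ N : ℕ, (C N).V →ₗ[ZMod 2] (D N).V)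
    (κ : ∀ N : ℕ, (C N).V →ₗ[ZMod 2] (D (N + 1)).V)
    (N : ℕ) (v : (C N).V) :
    telMap C D φ κ (ltwo C N v) = ltwo D N (φ N v) + lone D (N + 1) (κ N v) := by
  simp [lone, ltwo, telMap, DirectSum.toModule_lof]

lemma telDelta_lone (C : ℕ → F2GradedComplex)
    (α : ∀ N : ℕ, (C N).V →ₗ[ZMod 2] (C (N + 1)).V)
    (N : ℕ) (u : (C N).V) :
    telDelta C α (lone C N u) = lone C N ((C N).d u) := by
  simp [lone, telDelta, DirectSum.toModule_lof, Prod.mk_zero_zero]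

lemma telDelta_ltwo (C : ℕ → F2GradedComplex)
    (α : ∀ N : ℕ, (C N).V →ₗ[ZMod 2] (C (N + 1)).V)
    (N : ℕ) (v : (C N).V) :
    telDelta C α (ltwo C N v)
      = lone C N v + ltwo C N ((C N).d v) + lone C (N + 1) (α N v) := by
  simp only [lone, ltwo, telDelta, DirectSum.toModule_lof, LinearMap.add_apply,
    LinearMap.comp_apply, LinearMap.prod_apply, LinearMap.fst_apply,
    LinearMap.snd_apply, Pi.prod, map_zero, zero_add, LinearMap.zero_apply]
  rw [lof_split, lof_split, lof_split]
  simp [lone_zero, ltwo_zero]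
  abel

lemma telMap_comp (C D E : ℕ → F2GradedComplex)
    (φ : ∀ N : ℕ, (C N).V →ₗ[ZMod 2] (D N).V)
    (κ : ∀ N : ℕ, (C N).V →ₗ[ZMod 2] (D (N + 1)).V)
    (ψ : ∀ N : ℕ, (D N).V →ₗ[ZMod 2] (E N).V)
    (μ : ∀ N : ℕ, (D N).V →ₗ[ZMod 2] (E (N + 1)).V) :
    telMap D E ψ μ ∘ₗ telMap C D φ κ
      = telMap C E (fun N => ψ N ∘ₗ φ N)
          (fun N => ψ (N + 1) ∘ₗ κ N + μ N ∘ₗ φ N) := by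
  refine DirectSum.linearMap_ext _ fun N => LinearMap.ext fun x => ?_
  simp only [LinearMap.comp_apply, lof_split, map_add, telMap_lone, telMap_ltwo,
    LinearMap.add_apply]
  rw [lone_add]
  abel

/-- The key computation: a homotopy of telescope-data morphisms induces a
chain homotopy of telescope maps, the homotopy being `Tel`-assembled from the
data `(Φ, K)`. -/
lemma tel_key (C : ℕ → F2GradedComplex)
    (α : ∀ N : ℕ, (C N).V →ₗ[ZMod 2] (C (N + 1)).V)
    (ψ : ∀ N : ℕ, (C N).V →ₗ[ZMod 2] (C N).V)
    (μ : ∀ N : ℕ, (C N).V →ₗ[ZMod 2] (C (N + 1)).V)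
    (Φ : ∀ N : ℕ, (C N).V →ₗ[ZMod 2] (C N).V)
    (K : ∀ N : ℕ, (C N).V →ₗ[ZMod 2] (C (N + 1)).V)
    (hψ : ∀ N, LinearMap.id + ψ N = (C N).d ∘ₗ Φ N + Φ N ∘ₗ (C N).d)
    (hμ : ∀ N, μ N + Φ (N + 1) ∘ₗ α N + α N ∘ₗ Φ N
        = (C (N + 1)).d ∘ₗ K N + K N ∘ₗ (C N).d) :
    telMap C C ψ μ + LinearMap.id
      = telDelta C α ∘ₗ telMap C C Φ K + telMap C C Φ K ∘ₗ telDelta C α := by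
  have eψ : ∀ N (u : (C N).V),
      ψ N u = (C N).d (Φ N u) + Φ N ((C N).d u) + u := by
    intro N u
    have h' := LinearMap.congr_fun (hψ N) u
    simp only [LinearMap.add_apply, LinearMap.comp_apply, LinearMap.id_apply] at h'
    rw [← h']
    abel_nf
    simp [F2_two_nsmul, F2_two_zsmul]
  have eμ : ∀ N (v : (C N).V),
      μ N v = (C (N + 1)).d (K N v) + K N ((C N).d v)
        + Φ (N + 1) (α N v) + α N (Φ N v) := by
    intro N v
    have h' := LinearMap.congr_fun (hμ N) v
    simp only [LinearMap.add_apply, LinearMap.comp_apply] at h'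
    rw [← h']
    abel_nf
    simp [F2_two_nsmul, F2_two_zsmul]
  refine DirectSum.linearMap_ext _ fun N => LinearMap.ext fun x => ?_
  simp only [LinearMap.comp_apply, LinearMap.add_apply, LinearMap.id_apply,
    lof_split, map_add, telMap_lone, telMap_ltwo, telDelta_lone, telDelta_ltwo]
  rw [eψ N x.1, eψ N x.2, eμ N x.2]
  simp only [lone_add, ltwo_add]
  abel_nf
  simp [F2_two_nsmul, F2_two_zsmul]

end TelescopeHelpers

/-- If `(φ, κ)` and `(χ, λ)` are morphisms of telescope data
between `(C_N, α_N)` and `(D_N, β_N)` whose compositions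
`(χ ∘ φ, χ κ + λ φ)` and `(φ ∘ χ, φ λ + κ χ)` are homotopic to the identity
morphisms `(id, 0)`, then `Tel(φ, κ)` and `Tel(χ, λ)` are mutually inverse
homotopy equivalences between the telescopes: both composites are chain
homotopic to the identity. -/
theorem telMap_homotopy_equivalence (C D : ℕ → F2GradedComplex)
    (α : ∀ N : ℕ, (C N).V →ₗ[ZMod 2] (C (N + 1)).V)
    (hα : ∀ N : ℕ, IsChainMap (C N) (C (N + 1)) (α N))
    (β : ∀ N : ℕ, (D N).V →ₗ[ZMod 2] (D (N + 1)).V)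
    (hβ : ∀ N : ℕ, IsChainMap (D N) (D (N + 1)) (β N))
    (φ : ∀ N : ℕ, (C N).V →ₗ[ZMod 2] (D N).V)
    (κ : ∀ N : ℕ, (C N).V →ₗ[ZMod 2] (D (N + 1)).V)
    (hφκ : IsTelMorphism C D α β φ κ)
    (χ : ∀ N : ℕ, (D N).V →ₗ[ZMod 2] (C N).V)
    (lam : ∀ N : ℕ, (D N).V →ₗ[ZMod 2] (C (N + 1)).V)
    (hχlam : IsTelMorphism D C β α χ lam)
    (h₁ : TelMorphismHomotopic C C α α
      (fun N => χ N ∘ₗ φ N) (fun N => χ (N + 1) ∘ₗ κ N + lam N ∘ₗ φ N)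
      (fun _ => LinearMap.id) (fun _ => 0))
    (h₂ : TelMorphismHomotopic D D β β
      (fun N => φ N ∘ₗ χ N) (fun N => φ (N + 1) ∘ₗ lam N + κ N ∘ₗ χ N)
      (fun _ => LinearMap.id) (fun _ => 0)) :
    (∃ H : TelV C →ₗ[ZMod 2] TelV C,
      telMap D C χ lam ∘ₗ telMap C D φ κ + LinearMap.id
        = telDelta C α ∘ₗ H + H ∘ₗ telDelta C α) ∧
    (∃ H : TelV D →ₗ[ZMod 2] TelV D,
      telMap C D φ κ ∘ₗ telMap D C χ lam + LinearMap.id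
        = telDelta D β ∘ₗ H + H ∘ₗ telDelta D β) := by
  obtain ⟨Φ, K, -, -, hΦ, hK⟩ := h₁
  obtain ⟨Ψ, L, -, -, hΨ, hL⟩ := h₂
  constructor
  · refine ⟨telMap C C Φ K, ?_⟩
    rw [telMap_comp]
    exact tel_key C α _ _ Φ K (fun N => hΦ N) (fun N => by
      have h := hK N
      simpa using h)
  · refine ⟨telMap D D Ψ L, ?_⟩
    rw [telMap_comp]
    exact tel_key D β _ _ Ψ L (fun N => hΨ N) (fun N => by
      have h := hL N
      simpa using h)
end
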